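/- For m ≥ 2 and positive integers k_1,...,k_m with k_1 + ··· + k_m = n+1, the q-multinomial coefficient satisfies C(n+1; k_1,...,k_m)_q = Σ_{∅ ≠ J ⊆ {1,...,m}} (-1)^{|J|-1} ((q)_n / (q)_{n - |J| + 1}) · C(n + 1 - |J|; k - e_J)_q, where k - e_J is the m-tuple obtained from (k_1,...,k_m) by subtracting 1 from each coordinate indexed by J. -/
import Mathlib


/-- `(q)_n = (1-q)(1-q^2)⋯(1-q^n)`, with `(q)_0 = 1`. -/
noncomputable def qPoch {K : Type*} [Field K] (q : K) (n : ℕ) : K :=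
  ∏ j ∈ Finset.range n, (1 - q ^ (j + 1))

/-- The q-multinomial coefficient `C(n; k_1,…,k_m)_q = (q)_n / ((q)_{k_1}⋯(q)_{k_m})`. -/
noncomputable def qMultinomial {K : Type*} [Field K] (q : K) {m : ℕ} (n : ℕ) (k : Fin m → ℕ) : K :=
  qPoch q n / ∏ i, qPoch q (k i)

lemma one_sub_X_pow_ne_zero (j : ℕ) : (1 : RatFunc ℚ) - (RatFunc.X : RatFunc ℚ) ^ (j + 1) ≠ 0 := by
  intro h
  have hx : ((RatFunc.X : RatFunc ℚ)) ^ (j + 1) = 1 := by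
    have := sub_eq_zero.mp h
    exact this.symm
  have hX : (RatFunc.X : RatFunc ℚ) = algebraMap (Polynomial ℚ) (RatFunc ℚ) Polynomial.X :=
    (RatFunc.algebraMap_X).symm
  rw [hX, ← map_pow, show (1 : RatFunc ℚ) = algebraMap (Polynomial ℚ) (RatFunc ℚ) 1 by simp] at hx
  have := RatFunc.algebraMap_injective ℚ hx
  have hd := congrArg Polynomial.natDegree this
  simp [Polynomial.natDegree_X_pow] at hd

lemma qPoch_X_ne_zero (N : ℕ) : qPoch (RatFunc.X : RatFunc ℚ) N ≠ 0 := by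
  unfold qPoch
  exact Finset.prod_ne_zero_iff.2 fun j _ => one_sub_X_pow_ne_zero j

lemma qPoch_succ {K : Type*} [Field K] (q : K) (n : ℕ) :
    qPoch q (n + 1) = qPoch q n * (1 - q ^ (n + 1)) := by
  unfold qPoch; rw [Finset.prod_range_succ]

lemma qPoch_pred {K : Type*} [Field K] (q : K) {k : ℕ} (hk : 0 < k) :
    qPoch q k = qPoch q (k - 1) * (1 - q ^ k) := by
  obtain ⟨k', rfl⟩ := Nat.exists_eq_add_of_lt hk
  simp only [Nat.add_sub_cancel, Nat.zero_add]
  exact qPoch_succ q k'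

lemma qMR_aux {K : Type*} [Field K] (a A B P E : K) (hB : B ≠ 0) (hE : E ≠ 0) :
    a * (A / B) * (B / P) = a * (A * E) / (P * E) := by
  rw [mul_assoc, div_mul_div_comm, mul_comm A B, mul_div_mul_left _ _ hB,
    mul_div_assoc, mul_div_mul_right _ _ hE]

/-- For `m ≥ 2` and positive `k_1,…,k_m` with `k_1+⋯+k_m = n+1`,
`C(n+1; k_1,…,k_m)_q = Σ_{∅ ≠ J ⊆ {1,…,m}} (-1)^{|J|-1} ((q)_n/(q)_{n-|J|+1})
C(n+1-|J|; k - e_J)_q`, where `k - e_J` subtracts 1 from the coordinates indexed by `J`. -/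
theorem qMultinomial_recursion (m n : ℕ) (hm : 2 ≤ m) (k : Fin m → ℕ)
    (hpos : ∀ i, 0 < k i) (hsum : ∑ i, k i = n + 1) :
    qMultinomial (RatFunc.X : RatFunc ℚ) (n + 1) k =
      ∑ J ∈ (Finset.univ : Finset (Fin m)).powerset.erase ∅,
        (-1 : RatFunc ℚ) ^ (J.card - 1) *
          (qPoch (RatFunc.X : RatFunc ℚ) n / qPoch (RatFunc.X : RatFunc ℚ) (n + 1 - J.card)) *
          qMultinomial (RatFunc.X : RatFunc ℚ) (n + 1 - J.card)
            (fun i => k i - if i ∈ J then 1 else 0) := by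
  set q : RatFunc ℚ := (RatFunc.X : RatFunc ℚ) with hqdef
  have hpoch := qPoch_X_ne_zero
  have hD : (∏ i, qPoch q (k i)) ≠ 0 := Finset.prod_ne_zero_iff.2 fun i _ => hpoch _
  -- each summand rewritten
  have hterm : ∀ J ∈ (Finset.univ : Finset (Fin m)).powerset.erase ∅,
      (-1 : RatFunc ℚ) ^ (J.card - 1) *
          (qPoch q n / qPoch q (n + 1 - J.card)) *
          qMultinomial q (n + 1 - J.card) (fun i => k i - if i ∈ J then 1 else 0)
      = (-1 : RatFunc ℚ) ^ (J.card - 1) *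
          (qPoch q n * ∏ i ∈ J, (1 - q ^ (k i))) / ∏ i, qPoch q (k i) := by
    intro J hJ
    set P : RatFunc ℚ := ∏ i, qPoch q (k i - if i ∈ J then 1 else 0) with hPdef
    have hP : P ≠ 0 := Finset.prod_ne_zero_iff.2 fun i _ => hpoch _
    set E : RatFunc ℚ := ∏ i ∈ J, (1 - q ^ (k i)) with hEdef
    have hE : E ≠ 0 := Finset.prod_ne_zero_iff.2 fun i _ => by
      have h := one_sub_X_pow_ne_zero (k i - 1)
      rwa [Nat.sub_add_cancel (hpos i)] at h
    have hPE : P * E = ∏ i, qPoch q (k i) := by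
      have h2 : E = ∏ i : Fin m, (if i ∈ J then 1 - q ^ (k i) else 1) := by
        rw [Finset.prod_ite_mem, Finset.univ_inter]
      rw [hPdef, h2, ← Finset.prod_mul_distrib]
      refine Finset.prod_congr rfl fun i _ => ?_
      by_cases hi : i ∈ J
      · simp only [hi, if_true]
        exact (qPoch_pred q (hpos i)).symm
      · simp [hi]
    rw [qMultinomial, ← hPdef, ← hPE]
    exact qMR_aux _ _ _ _ _ (hpoch _) hE
  rw [Finset.sum_congr rfl hterm]
  -- sum of signed products
  have hkey : ∑ J ∈ (Finset.univ : Finset (Fin m)).powerset.erase ∅,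
      (-1 : RatFunc ℚ) ^ (J.card - 1) * ∏ i ∈ J, (1 - q ^ (k i)) = 1 - q ^ (n + 1) := by
    have hprod : ∏ i : Fin m, ((-(1 - q ^ (k i))) + 1) =
        ∑ t ∈ (Finset.univ : Finset (Fin m)).powerset,
          (∏ i ∈ t, (-(1 - q ^ (k i)))) * ∏ i ∈ Finset.univ \ t, (1 : RatFunc ℚ) := by
      exact Finset.prod_add _ _ _
    have hL : ∏ i : Fin m, ((-(1 - q ^ (k i))) + 1) = q ^ (n + 1) := by
      have : ∀ i : Fin m, (-(1 - q ^ (k i))) + 1 = q ^ (k i) := fun i => by ring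
      rw [Finset.prod_congr rfl fun i _ => this i, Finset.prod_pow_eq_pow_sum, hsum]
    have hR : ∀ t : Finset (Fin m),
        (∏ i ∈ t, (-(1 - q ^ (k i)))) * ∏ i ∈ Finset.univ \ t, (1 : RatFunc ℚ)
        = (-1 : RatFunc ℚ) ^ t.card * ∏ i ∈ t, (1 - q ^ (k i)) := by
      intro t
      rw [Finset.prod_const_one, mul_one]
      rw [show (fun i => -(1 - q ^ (k i))) = fun i => (-1) * (1 - q ^ (k i)) by ext i; ring]
      rw [Finset.prod_mul_distrib, Finset.prod_const]
    have hsplit : ∑ t ∈ (Finset.univ : Finset (Fin m)).powerset.erase ∅,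
        (-1 : RatFunc ℚ) ^ t.card * ∏ i ∈ t, (1 - q ^ (k i)) = q ^ (n + 1) - 1 := by
      have hmem : (∅ : Finset (Fin m)) ∈ (Finset.univ : Finset (Fin m)).powerset :=
        Finset.mem_powerset.2 (Finset.empty_subset _)
      have htot : ∑ t ∈ (Finset.univ : Finset (Fin m)).powerset,
          (-1 : RatFunc ℚ) ^ t.card * ∏ i ∈ t, (1 - q ^ (k i)) = q ^ (n + 1) := by
        rw [← hL, hprod]
        exact Finset.sum_congr rfl fun t _ => (hR t).symm
      have hsp := Finset.sum_erase_add (Finset.univ : Finset (Fin m)).powerset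
        (fun t => (-1 : RatFunc ℚ) ^ t.card * ∏ i ∈ t, (1 - q ^ (k i))) hmem
      simp only [Finset.card_empty, pow_zero, Finset.prod_empty, mul_one] at hsp
      rw [htot] at hsp
      linear_combination hsp
    have hsign : ∀ t ∈ (Finset.univ : Finset (Fin m)).powerset.erase ∅,
        (-1 : RatFunc ℚ) ^ (t.card - 1) * ∏ i ∈ t, (1 - q ^ (k i))
        = - ((-1 : RatFunc ℚ) ^ t.card * ∏ i ∈ t, (1 - q ^ (k i))) := by
      intro t ht
      have hne : t ≠ ∅ := (Finset.mem_erase.1 ht).1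
      have hc : 0 < t.card := Finset.card_pos.2 (Finset.nonempty_iff_ne_empty.2 hne)
      obtain ⟨c, hc'⟩ := Nat.exists_eq_add_of_lt hc
      rw [hc']
      simp only [Nat.zero_add, Nat.add_sub_cancel]
      ring
    rw [Finset.sum_congr rfl hsign, Finset.sum_neg_distrib, hsplit]
    ring
  -- assemble
  rw [← Finset.sum_div]
  have : ∑ J ∈ (Finset.univ : Finset (Fin m)).powerset.erase ∅,
      (-1 : RatFunc ℚ) ^ (J.card - 1) * (qPoch q n * ∏ i ∈ J, (1 - q ^ (k i)))
      = qPoch q n * (1 - q ^ (n + 1)) := by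
    rw [← hkey, Finset.mul_sum]
    refine Finset.sum_congr rfl fun J _ => by ring
  rw [this, qMultinomial, qPoch_succ]
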